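/- arXiv:2011.12418 — 5 statements merged into one kernel-verified Lean document; each statement's English description precedes it below -/
import Mathlib

section
/- Let (V, B, q) be a proper quadratic space over ℤ/2, i.e. q vanishes on the radical R = {r ∈ V : B(r,v) = 0 for all v}. Then the fibers of q are unbalanced: the cardinality of q⁻¹(0) is not equal to the cardinality of q⁻¹(1), i.e. q₀ ≠ q₁. -/
/-!
Consider the sign sum `S = ∑ₓ (-1)^{q x} = q₀ - q₁`. Writing the first variable of `S²` as `z + y`,
the quadratic relation turns `(-1)^{q (z + y) + q y}` into `(-1)^{q z + B z y}`, and summing the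
character `y ↦ (-1)^{B z y}` kills every `z` outside the radical `R`. Hence
`S² = |V| · ∑_{r ∈ R} (-1)^{q r}`, which equals `|V| · |R| > 0` when `q` vanishes on `R`.
-/

open Finset

def signChar : AddChar (ZMod 2) ℤ := AddChar.zmodChar 2 (by norm_num : (-1 : ℤ) ^ 2 = 1)

lemma signChar_eq_ite (a : ZMod 2) :
    signChar a = (if a = 0 then 1 else 0) - (if a = 1 then 1 else 0) := by
  revert a; decide

lemma signChar_eq_one_iff {a : ZMod 2} : signChar a = 1 ↔ a = 0 := by
  revert a; decide

lemma sum_signChar_eq_card_sub_card {V : Type*} [Fintype V] (f : V → ZMod 2) :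
    ∑ x, signChar (f x) = (Nat.card {x // f x = 0} : ℤ) - Nat.card {x // f x = 1} := by
  classical
  simp only [signChar_eq_ite, sum_sub_distrib, sum_boole, Nat.card_eq_fintype_card,
    Fintype.card_subtype]

section QuadraticSpace

variable {V : Type*} [AddCommGroup V] [Module (ZMod 2) V] [Fintype V]

lemma sum_signChar_apply (f : V →ₗ[ZMod 2] ZMod 2) [Decidable (f = 0)] :
    ∑ x, signChar (f x) = if f = 0 then (Fintype.card V : ℤ) else 0 := by
  convert (signChar.compAddMonoidHom f.toAddMonoidHom).sum_eq_ite using 2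
  · rfl
  rw [AddChar.eq_zero_iff, LinearMap.ext_iff]
  simp [signChar_eq_one_iff]

variable (B : V →ₗ[ZMod 2] V →ₗ[ZMod 2] ZMod 2) {q : V → ZMod 2}

open Classical in
theorem sq_sum_signChar_eq_card_mul_sum_ker (hq : ∀ x y : V, q (x + y) = q x + q y + B x y) :
    (∑ x, signChar (q x)) ^ 2 = Fintype.card V * ∑ z : LinearMap.ker B, signChar (q z) := by
  classical
  have hshift (z y : V) : q (z + y) + q y = q z + B z y := by grind
  calc (∑ x, signChar (q x)) ^ 2 = ∑ y, ∑ x, signChar (q x) * signChar (q y) := by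
        rw [sq, sum_mul_sum, sum_comm]
    _ = ∑ y, ∑ z, signChar (q (z + y)) * signChar (q y) :=
        sum_congr rfl fun y _ => (Fintype.sum_equiv (Equiv.addRight y) _ _ fun z => rfl).symm
    _ = ∑ z, signChar (q z) * ∑ y, signChar (B z y) := by
        rw [sum_comm]
        simp only [← AddChar.map_add_eq_mul, hshift, mul_sum]
    _ = _ := by
        simp only [sum_signChar_apply, mul_ite, mul_zero, ← sum_filter, ← sum_mul]
        rw [mul_comm]
        exact congrArg _ (sum_subtype _ (by simp) _)

theorem sq_sum_signChar_eq_card_mul_card_ker (hq : ∀ x y : V, q (x + y) = q x + q y + B x y)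
    (hproper : ∀ r : V, (∀ v : V, B r v = 0) → q r = 0) :
    (∑ x, signChar (q x)) ^ 2 = Nat.card V * Nat.card (LinearMap.ker B) := by
  have hker (r : LinearMap.ker B) : signChar (q r) = 1 :=
    signChar_eq_one_iff.2 (hproper r fun v => by simp [LinearMap.mem_ker.1 r.2])
  simp [sq_sum_signChar_eq_card_mul_sum_ker B hq, hker, Nat.card_eq_fintype_card]

end QuadraticSpace

/-- A proper quadratic space over `ℤ/2` has unbalanced fibers: `card q⁻¹(0) ≠ card q⁻¹(1)`. -/
theorem stmt_2 {V : Type*} [AddCommGroup V] [Module (ZMod 2) V] [Finite V]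
    (B : V →ₗ[ZMod 2] V →ₗ[ZMod 2] ZMod 2) (q : V → ZMod 2)
    (hq : ∀ x y : V, q (x + y) = q x + q y + B x y)
    (hproper : ∀ r : V, (∀ v : V, B r v = 0) → q r = 0) :
    Nat.card {x : V // q x = 0} ≠ Nat.card {x : V // q x = 1} := by
  cases nonempty_fintype V
  have hsq_pos : 0 < (∑ x, signChar (q x)) ^ 2 := by
    rw [sq_sum_signChar_eq_card_mul_card_ker B hq hproper]
    exact_mod_cast Nat.mul_pos Nat.card_pos Nat.card_pos
  intro hcard
  rw [sum_signChar_eq_card_sub_card, hcard, sub_self] at hsq_pos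
  norm_num at hsq_pos
end

section
/- Let (V, B, q) be a quadratic space over ℤ/2. Then the fibers of q are balanced (the cardinality of q⁻¹(0) equals the cardinality of q⁻¹(1)) if and only if the space is not proper, i.e. if and only if there exists an element r with B(r,v) = 0 for all v ∈ V and q(r) = 1. -/
/-!
Let `S = ∑ₓ (-1)^(q x) = q₀ - q₁`. Substituting `x ↦ r + x` in `S²` and using the polarization
identity gives `S² = |V| · ∑_{r ∈ R} (-1)^(q r)`, because `∑ₓ (-1)^(B r x)` is a character sum that
vanishes unless `r ∈ R`. If `q` vanishes on `R` this is `|V| · |R| > 0`. If `q r = 1` for some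
`r ∈ R`, then translation by `r` flips every sign, so `S = -S`.
-/

open Finset

lemma signChar_one : signChar 1 = -1 := by decide

lemma ZMod.eq_zero_of_ne_one_mod_two {a : ZMod 2} (h : a ≠ 1) : a = 0 := by
  revert a; decide

lemma sum_signChar_comp_eq_ite {G : Type*} [AddGroup G] [Fintype G] (f : G →+ ZMod 2) :
    ∑ x, signChar (f x) = if ∀ x, f x = 0 then (Fintype.card G : ℤ) else 0 := by
  split_ifs with hf
  · simp [hf]
  · push Not at hf
    obtain ⟨x, hx⟩ := hf
    have hψ : signChar.compAddMonoidHom f ≠ 1 :=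
      AddChar.ne_one_iff.mpr ⟨x, by simpa [signChar_eq_one_iff] using hx⟩
    exact AddChar.sum_eq_zero_of_ne_one hψ

def signSum {X : Type*} [Fintype X] (q : X → ZMod 2) : ℤ := ∑ x, signChar (q x)

lemma signSum_eq_card_sub_card {X : Type*} [Fintype X] (q : X → ZMod 2) :
    signSum q = Nat.card {x // q x = 0} - Nat.card {x // q x = 1} := by
  classical
  simp only [signSum, signChar_eq_ite, sum_sub_distrib, sum_boole, Nat.card_eq_fintype_card,
    Fintype.card_subtype]

section

variable {V : Type*} [AddCommGroup V] [Module (ZMod 2) V] [Fintype V]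
  {B : V →ₗ[ZMod 2] V →ₗ[ZMod 2] ZMod 2} {q : V → ZMod 2}

lemma signSum_mul_self (hq : ∀ x y, q (x + y) = q x + q y + B x y) :
    signSum q * signSum q = Fintype.card V * ∑ r with ∀ v, B r v = 0, signChar (q r) := by
  classical
  have key : ∀ x r, q x + q (r + x) = q r + B r x := fun x r => by
    rw [hq]; grind
  calc signSum q * signSum q = ∑ x, ∑ r, signChar (q x) * signChar (q (r + x)) := by
        simp only [signSum, sum_mul_sum]
        exact sum_congr rfl fun x _ => (Equiv.sum_comp (Equiv.addRight x) _).symm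
    _ = ∑ r, signChar (q r) * ∑ x, signChar (B r x) := by
        simp only [← AddChar.map_add_eq_mul, key, mul_sum]
        exact sum_comm
    _ = _ := by
        rw [sum_filter, mul_sum]
        refine sum_congr rfl fun r _ => ?_
        rw [← LinearMap.toAddMonoidHom_coe, sum_signChar_comp_eq_ite]
        split_ifs <;> simp [mul_comm]

lemma signSum_eq_zero_of_radical (hq : ∀ x y, q (x + y) = q x + q y + B x y) {r : V}
    (hr : ∀ v, B r v = 0) (hqr : q r = 1) : signSum q = 0 := by
  have hflip : ∀ x, signChar (q (r + x)) = -signChar (q x) := fun x => by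
    rw [hq, hr, hqr, add_zero, AddChar.map_add_eq_mul, signChar_one, neg_one_mul]
  have : signSum q = -signSum q := calc
    signSum q = ∑ x, signChar (q (r + x)) := (Equiv.sum_comp (Equiv.addLeft r) _).symm
    _ = -signSum q := by simp only [hflip, sum_neg_distrib, signSum]
  exact self_eq_neg.mp this

lemma signSum_ne_zero_of_proper (hq : ∀ x y, q (x + y) = q x + q y + B x y)
    (hproper : ∀ r, (∀ v, B r v = 0) → q r = 0) : signSum q ≠ 0 := by
  classical
  have hsq : signSum q * signSum q = Fintype.card V * #{r | ∀ v, B r v = 0} := by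
    rw [signSum_mul_self hq, sum_congr rfl fun r hr => by
      rw [hproper r (mem_filter.mp hr).2, AddChar.map_zero_eq_one], sum_const, nsmul_one]
  have hpos : 0 < Fintype.card V * #{r | ∀ v, B r v = 0} :=
    Nat.mul_pos Fintype.card_pos (card_pos.mpr ⟨0, by simp⟩)
  intro h
  rw [h, zero_mul] at hsq
  omega

lemma signSum_eq_zero_iff (hq : ∀ x y, q (x + y) = q x + q y + B x y) :
    signSum q = 0 ↔ ∃ r, (∀ v, B r v = 0) ∧ q r = 1 := by
  refine ⟨fun h => ?_, fun ⟨r, hr, hqr⟩ => signSum_eq_zero_of_radical hq hr hqr⟩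
  by_contra! hproper
  exact signSum_ne_zero_of_proper hq
    (fun r hr => ZMod.eq_zero_of_ne_one_mod_two (hproper r hr)) h

end

/-- The fibers of a quadratic form `q` over `ℤ/2` are balanced if and only if the
quadratic space is not proper, i.e. there is a radical element `r` with `q r = 1`. -/
theorem stmt_3 {V : Type*} [AddCommGroup V] [Module (ZMod 2) V] [Finite V]
    (B : V →ₗ[ZMod 2] V →ₗ[ZMod 2] ZMod 2) (q : V → ZMod 2)
    (hq : ∀ x y : V, q (x + y) = q x + q y + B x y) :
    Nat.card {x : V // q x = 0} = Nat.card {x : V // q x = 1} ↔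
      ∃ r : V, (∀ v : V, B r v = 0) ∧ q r = 1 := by
  have := Fintype.ofFinite V
  rw [← signSum_eq_zero_iff hq, signSum_eq_card_sub_card, sub_eq_zero, Nat.cast_inj]
end

section
/- Democratic computation of the Arf invariant: let (V, B, q) be a proper quadratic space over ℤ/2 (q vanishes on the radical R), and suppose a₁,…,aₙ, b₁,…,bₙ are elements of V satisfying B(aᵢ,aⱼ) = 0 and B(bᵢ,bⱼ) = 0 for all i, j, B(aᵢ,bⱼ) = 1 if i = j and 0 otherwise, and such that V is spanned by the aᵢ, the bᵢ, and the radical R (i.e. every element of V is a sum of an element of the span of {aᵢ, bᵢ} and an element of R). Then q₀ ≠ q₁, and the Arf invariant Σᵢ q(aᵢ)·q(bᵢ) ∈ ZMod 2 equals 0 if and only if q₀ > q₁ (equivalently, it equals 1 if and only if q₀ < q₁). -/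
/-!
The Gauss sum `∑ v, (-1) ^ q v` equals `q₀ - q₁`. The symplectic family spans a complement `W` of
the radical `R`, so `V = W ⊕ R`, and `q (w + r) = q w` because `q` vanishes on `R`. On `W` the sum
factors over the hyperbolic planes `⟨aᵢ, bᵢ⟩`, each contributing `2 * (-1) ^ (q aᵢ * q bᵢ)`. Hence
`q₀ - q₁ = |R| * 2 ^ n * (-1) ^ Arf`, which is nonzero and has the sign of `(-1) ^ Arf`.
-/

open Finset

theorem AddChar.map_sum_eq_prod {A M ι : Type*} [AddCommMonoid A] [CommMonoid M]
    (ψ : AddChar A M) (s : Finset ι) (f : ι → A) :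
    ψ (∑ i ∈ s, f i) = ∏ i ∈ s, ψ (f i) := by
  classical
  induction s using Finset.induction_on with
  | empty => simp
  | insert i s hi ih => rw [sum_insert hi, prod_insert hi, AddChar.map_add_eq_mul, ih]

def IsQuadraticRefinement {R M : Type*} [CommRing R] [AddCommGroup M] [Module R M]
    (B : M →ₗ[R] M →ₗ[R] R) (q : M → R) : Prop :=
  ∀ x y, q (x + y) = q x + q y + B x y

namespace IsQuadraticRefinement

section CommRing

variable {R M : Type*} [CommRing R] [AddCommGroup M] [Module R M]
  {B : M →ₗ[R] M →ₗ[R] R} {q : M → R}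

theorem map_zero (hq : IsQuadraticRefinement B q) : q 0 = 0 := by
  simpa using hq 0 0

theorem apply_comm (hq : IsQuadraticRefinement B q) (x y : M) : B x y = B y x := by
  have h := hq x y
  rw [add_comm x y, hq y x] at h
  linear_combination -h

theorem map_sum_of_pairwise {ι : Type*} (hq : IsQuadraticRefinement B q) (s : Finset ι)
    (v : ι → M) (hv : Pairwise fun i j => B (v i) (v j) = 0) :
    q (∑ i ∈ s, v i) = ∑ i ∈ s, q (v i) := by
  classical
  induction s using Finset.induction_on with
  | empty => simpa using hq.map_zero
  | insert i s hi ih =>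
    have horth : B (v i) (∑ j ∈ s, v j) = 0 := by
      rw [map_sum]
      exact sum_eq_zero fun j hj => hv (ne_of_mem_of_not_mem hj hi).symm
    rw [sum_insert hi, sum_insert hi, hq, ih, horth, add_zero]

theorem map_add_of_mem_ker (hq : IsQuadraticRefinement B q) (x : M) {r : M}
    (hr : r ∈ LinearMap.ker B) (hqr : q r = 0) : q (x + r) = q x := by
  rw [hq, hqr, hq.apply_comm, LinearMap.mem_ker.1 hr, LinearMap.zero_apply, add_zero, add_zero]

end CommRing

variable {V : Type*} [AddCommGroup V] [Module (ZMod 2) V]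
  {B : V →ₗ[ZMod 2] V →ₗ[ZMod 2] ZMod 2} {q : V → ZMod 2}

theorem map_smul (hq : IsQuadraticRefinement B q) (c : ZMod 2) (v : V) :
    q (c • v) = c * q v := by
  rcases (by decide : ∀ x : ZMod 2, x = 0 ∨ x = 1) c with rfl | rfl
  · simpa using hq.map_zero
  · simp

theorem map_hyperbolic (hq : IsQuadraticRefinement B q) {a b : V} (hab : B a b = 1)
    (x y : ZMod 2) : q (x • a + y • b) = x * q a + y * q b + x * y := by
  simp [hq (x • a), hq.map_smul, hab, mul_comm]

end IsQuadraticRefinement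

def parityChar : AddChar (ZMod 2) ℤ where
  toFun c := if c = 0 then 1 else -1
  map_zero_eq_one' := rfl
  map_add_eq_mul' := by decide

theorem parityChar_apply (c : ZMod 2) : parityChar c = if c = 0 then 1 else -1 := rfl

theorem sum_parityChar_comp {α : Type*} [Fintype α] (f : α → ZMod 2) :
    ∑ x, parityChar (f x) = (Nat.card {x // f x = 0} : ℤ) - Nat.card {x // f x = 1} := by
  classical
  have hsplit : ∀ c : ZMod 2,
      parityChar c = (if c = 0 then 1 else 0) - (if c = 1 then 1 else 0) := by decide
  simp only [hsplit, sum_sub_distrib, sum_boole, Nat.card_eq_fintype_card, Fintype.card_subtype]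

theorem sum_parityChar_hyperbolic {ι : Type*} [Fintype ι] [DecidableEq ι] (α β : ι → ZMod 2) :
    ∑ c : ι → ZMod 2 × ZMod 2,
        parityChar (∑ i, ((c i).1 * α i + (c i).2 * β i + (c i).1 * (c i).2)) =
      2 ^ Fintype.card ι * parityChar (∑ i, α i * β i) := by
  have hplane : ∀ x y : ZMod 2,
      ∑ s : ZMod 2 × ZMod 2, parityChar (s.1 * x + s.2 * y + s.1 * s.2) =
        2 * parityChar (x * y) := by decide
  simp only [AddChar.map_sum_eq_prod]
  rw [← Fintype.prod_sum fun i (s : ZMod 2 × ZMod 2) =>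
    parityChar (s.1 * α i + s.2 * β i + s.1 * s.2)]
  simp [hplane, prod_mul_distrib]

theorem ne_and_eq_zero_iff_gt_of_sub_eq {m k : ℕ} {N : ℤ} (hN : 0 < N) (c : ZMod 2)
    (h : (m : ℤ) - k = N * parityChar c) : m ≠ k ∧ (c = 0 ↔ m > k) := by
  rcases (by decide : ∀ x : ZMod 2, x = 0 ∨ x = 1) c with rfl | rfl
  · simp only [parityChar_apply, if_true, mul_one] at h
    exact ⟨by omega, by simp only [true_iff]; omega⟩
  · simp only [parityChar_apply, one_ne_zero, if_false, mul_neg_one] at h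
    exact ⟨by omega, by simp only [one_ne_zero, false_iff]; omega⟩

structure IsSymplecticFamily {R M ι : Type*} [CommRing R] [AddCommGroup M] [Module R M]
    [DecidableEq ι] (B : M →ₗ[R] M →ₗ[R] R) (a b : ι → M) : Prop where
  apply_a_a : ∀ i j, B (a i) (a j) = 0
  apply_b_b : ∀ i j, B (b i) (b j) = 0
  apply_a_b : ∀ i j, B (a i) (b j) = if i = j then 1 else 0

section SymplecticFamily

variable {V ι : Type*} [AddCommGroup V] [Module (ZMod 2) V] [Fintype ι] [DecidableEq ι]
  {B : V →ₗ[ZMod 2] V →ₗ[ZMod 2] ZMod 2} {q : V → ZMod 2} {a b : ι → V}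

def symplecticCombination (a b : ι → V) (c : ι → ZMod 2 × ZMod 2) : V :=
  ∑ i, ((c i).1 • a i + (c i).2 • b i)

namespace IsSymplecticFamily

theorem apply_symplecticCombination_b (hS : IsSymplecticFamily B a b)
    (c : ι → ZMod 2 × ZMod 2) (j : ι) : B (symplecticCombination a b c) (b j) = (c j).1 := by
  simp [symplecticCombination, hS.apply_a_b, hS.apply_b_b]

theorem apply_a_symplecticCombination (hS : IsSymplecticFamily B a b)
    (c : ι → ZMod 2 × ZMod 2) (j : ι) : B (a j) (symplecticCombination a b c) = (c j).2 := by
  simp [symplecticCombination, hS.apply_a_a, hS.apply_a_b, eq_comm (a := j)]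

theorem map_symplecticCombination (hS : IsSymplecticFamily B a b)
    (hq : IsQuadraticRefinement B q) (c : ι → ZMod 2 × ZMod 2) :
    q (symplecticCombination a b c) =
      ∑ i, ((c i).1 * q (a i) + (c i).2 * q (b i) + (c i).1 * (c i).2) := by
  have horth : Pairwise fun i j =>
      B ((c i).1 • a i + (c i).2 • b i) ((c j).1 • a j + (c j).2 • b j) = 0 := by
    intro i j hij
    simp [hS.apply_a_a, hS.apply_b_b, hS.apply_a_b, hq.apply_comm (b i), hij, hij.symm]
  rw [symplecticCombination, hq.map_sum_of_pairwise _ _ horth]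
  exact sum_congr rfl fun i _ => hq.map_hyperbolic (by simp [hS.apply_a_b]) _ _

theorem bijective_symplecticCombination_add_ker (hS : IsSymplecticFamily B a b)
    (hq : IsQuadraticRefinement B q)
    (hspan : ∀ v : V, ∃ w ∈ Submodule.span (ZMod 2) (Set.range a ∪ Set.range b),
      ∃ r : V, (∀ u : V, B r u = 0) ∧ v = w + r) :
    Function.Bijective fun p : (ι → ZMod 2 × ZMod 2) × LinearMap.ker B =>
      symplecticCombination a b p.1 + p.2 := by
  constructor
  · rintro ⟨c, r⟩ ⟨c', r'⟩
      (h : symplecticCombination a b c + r = symplecticCombination a b c' + r')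
    have hr : ∀ (r : LinearMap.ker B) (u : V), B r u = 0 ∧ B u r = 0 := fun r u => by
      simp [hq.apply_comm u, LinearMap.mem_ker.1 r.2]
    have coords : ∀ (c : ι → ZMod 2 × ZMod 2) (r : LinearMap.ker B) (j : ι),
        (B (symplecticCombination a b c + r) (b j), B (a j) (symplecticCombination a b c + r))
          = c j := fun c r j => by
      simp [hS.apply_symplecticCombination_b, hS.apply_a_symplecticCombination, hr]
    have hc : c = c' := funext fun j => by rw [← coords c r j, ← coords c' r' j, h]
    subst hc
    exact Prod.ext rfl (Subtype.ext (add_left_cancel h))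
  · intro v
    obtain ⟨w, hw, r, hr, rfl⟩ := hspan v
    rw [Submodule.span_union] at hw
    obtain ⟨wa, hwa, wb, hwb, rfl⟩ := Submodule.mem_sup.1 hw
    obtain ⟨x, rfl⟩ := (Submodule.mem_span_range_iff_exists_fun (ZMod 2)).1 hwa
    obtain ⟨y, rfl⟩ := (Submodule.mem_span_range_iff_exists_fun (ZMod 2)).1 hwb
    refine ⟨(fun i => (x i, y i), ⟨r, LinearMap.mem_ker.2 (LinearMap.ext hr)⟩), ?_⟩
    simp [symplecticCombination, sum_add_distrib]

end IsSymplecticFamily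

end SymplecticFamily

theorem sum_parityChar_quadraticRefinement {V ι : Type*} [AddCommGroup V] [Module (ZMod 2) V]
    [Fintype V] [Fintype ι] [DecidableEq ι] {B : V →ₗ[ZMod 2] V →ₗ[ZMod 2] ZMod 2}
    {q : V → ZMod 2} {a b : ι → V} (hq : IsQuadraticRefinement B q)
    (hproper : ∀ r : V, (∀ v : V, B r v = 0) → q r = 0) (hS : IsSymplecticFamily B a b)
    (hspan : ∀ v : V, ∃ w ∈ Submodule.span (ZMod 2) (Set.range a ∪ Set.range b),
      ∃ r : V, (∀ u : V, B r u = 0) ∧ v = w + r) :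
    ∑ v, parityChar (q v) =
      Nat.card (LinearMap.ker B) * (2 ^ Fintype.card ι * parityChar (∑ i, q (a i) * q (b i))) := by
  classical
  have hker (r : LinearMap.ker B) : q r = 0 :=
    hproper r fun v => by rw [LinearMap.mem_ker.1 r.2, LinearMap.zero_apply]
  rw [← (hS.bijective_symplecticCombination_add_ker hq hspan).sum_comp, Fintype.sum_prod_type]
  simp only [hq.map_add_of_mem_ker _ (Subtype.prop _) (hker _), hS.map_symplecticCombination hq,
    sum_const, card_univ, nsmul_eq_mul, ← mul_sum, sum_parityChar_hyperbolic,
    Nat.card_eq_fintype_card]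

/-- Democratic computation of the Arf invariant: for a proper quadratic space over `ℤ/2`
with a symplectic family `a₁,…,aₙ,b₁,…,bₙ` spanning `V` together with the radical,
the fibers of `q` are unbalanced, and the Arf invariant `Σᵢ q(aᵢ)·q(bᵢ)` is `0`
exactly when `card q⁻¹(0) > card q⁻¹(1)`. -/
theorem stmt_4 {V : Type*} [AddCommGroup V] [Module (ZMod 2) V] [Finite V]
    (B : V →ₗ[ZMod 2] V →ₗ[ZMod 2] ZMod 2) (q : V → ZMod 2)
    (hq : ∀ x y : V, q (x + y) = q x + q y + B x y)
    (hproper : ∀ r : V, (∀ v : V, B r v = 0) → q r = 0)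
    (n : ℕ) (a b : Fin n → V)
    (haa : ∀ i j, B (a i) (a j) = 0)
    (hbb : ∀ i j, B (b i) (b j) = 0)
    (hab : ∀ i j, B (a i) (b j) = if i = j then 1 else 0)
    (hspan : ∀ v : V, ∃ w ∈ Submodule.span (ZMod 2) (Set.range a ∪ Set.range b),
      ∃ r : V, (∀ u : V, B r u = 0) ∧ v = w + r) :
    Nat.card {x : V // q x = 0} ≠ Nat.card {x : V // q x = 1} ∧
      ((∑ i : Fin n, q (a i) * q (b i)) = 0 ↔
        Nat.card {x : V // q x = 0} > Nat.card {x : V // q x = 1}) := by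
  have := Fintype.ofFinite V
  have hgauss := sum_parityChar_quadraticRefinement hq hproper ⟨haa, hbb, hab⟩ hspan
  rw [sum_parityChar_comp, Fintype.card_fin, ← mul_assoc] at hgauss
  have hcard : (0 : ℤ) < Nat.card (LinearMap.ker B) := by exact_mod_cast Nat.card_pos
  exact ne_and_eq_zero_iff_gt_of_sub_eq (by positivity) _ hgauss
end

section
/- Every ℤ/8-valued quadratic enhancement is twice a ℤ/4-valued enhancement: let V be a finite-dimensional vector space over ZMod 2, let B : V → V → ZMod 2 be a bilinear form, let ι₈ : ZMod 2 → ZMod 8 be the additive homomorphism with ι₈(1) = 4, and suppose f : V → ZMod 8 satisfies f(x+y) = f(x) + f(y) + ι₈(B(x,y)) for all x, y ∈ V. Then there exists e : V → ZMod 4 satisfying e(x+y) = e(x) + e(y) + ι₄(B(x,y)) for all x, y ∈ V (where ι₄ : ZMod 2 → ZMod 4 is the additive homomorphism with ι₄(1) = 2), such that f(x) = d(e(x)) for all x ∈ V, where d : ZMod 4 → ZMod 8 is the additive homomorphism with d(1) = 2. -/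
/-! Since `ι₈ (B x x) ∈ {0, 4}`, the relation at `y = x` gives `f x + f x ∈ {0, 4}`, so every value
of `f` is killed by `4`. In `ZMod 8` these are exactly the even residues, i.e. the image of the
injective map `d`; so `e := d⁻¹ ∘ f` is defined, and it is an enhancement because `d` is additive,
injective and satisfies `d ∘ ι₄ = ι₈`. -/

def IsQuadraticEnhancement {V A : Type*} [AddCommGroup V] [Module (ZMod 2) V] [AddCommGroup A]
    (ι : ZMod 2 →+ A) (B : V →ₗ[ZMod 2] V →ₗ[ZMod 2] ZMod 2) (f : V → A) : Prop :=
  ∀ x y, f (x + y) = f x + f y + ι (B x y)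

namespace IsQuadraticEnhancement

variable {V A : Type*} [AddCommGroup V] [Module (ZMod 2) V] [AddCommGroup A]
  {ι : ZMod 2 →+ A} {B : V →ₗ[ZMod 2] V →ₗ[ZMod 2] ZMod 2} {f : V → A}

theorem map_zero (hf : IsQuadraticEnhancement ι B f) : f 0 = 0 := by
  have h := hf 0 0
  simp only [add_zero, LinearMap.map_zero, AddMonoidHom.map_zero] at h
  exact left_eq_add.mp h

theorem four_nsmul_eq_zero (hf : IsQuadraticEnhancement ι B f) (x : V) : 4 • f x = 0 := by
  have hx : x + x = 0 := by
    rw [← two_smul (ZMod 2) x, show (2 : ZMod 2) = 0 from rfl, zero_smul]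
  have hdouble : f x + f x = -ι (B x x) := by
    rw [← add_eq_zero_iff_eq_neg, ← hf, hx, hf.map_zero]
  calc 4 • f x = 2 • (f x + f x) := by rw [← two_nsmul, ← mul_nsmul]
    _ = -ι (2 • B x x) := by rw [hdouble, smul_neg, map_nsmul]
    _ = 0 := by rw [two_nsmul, CharTwo.add_self_eq_zero, AddMonoidHom.map_zero, neg_zero]

theorem exists_lift {A' : Type*} [AddCommGroup A'] {ι' : ZMod 2 →+ A'} {d : A' →+ A}
    (hd : Function.Injective d) (hdι : ∀ c, d (ι' c) = ι c)
    (hf : IsQuadraticEnhancement ι B f) (hrange : ∀ x, f x ∈ Set.range d) :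
    ∃ e : V → A', IsQuadraticEnhancement ι' B e ∧ ∀ x, f x = d (e x) := by
  choose e he using hrange
  refine ⟨e, fun x y ↦ hd ?_, fun x ↦ (he x).symm⟩
  rw [map_add, map_add, he, he, he, hdι, hf]

end IsQuadraticEnhancement

theorem AddMonoidHom.map_zmod_eq_val_nsmul {n : ℕ} [NeZero n] {A : Type*} [AddMonoid A]
    (φ : ZMod n →+ A) (a : ZMod n) : φ a = a.val • φ 1 := by
  rw [← map_nsmul, nsmul_one, ZMod.natCast_zmod_val]

section ZModFourToEight

variable {d : ZMod 4 →+ ZMod 8} (hd : d 1 = 2)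
include hd

theorem apply_eq_val_nsmul_two_of_map_one_eq_two (a : ZMod 4) : d a = a.val • 2 := by
  rw [d.map_zmod_eq_val_nsmul, hd]

theorem injective_of_map_one_eq_two : Function.Injective d := by
  intro a b hab
  simp only [apply_eq_val_nsmul_two_of_map_one_eq_two hd] at hab
  revert a b
  decide

theorem mem_range_of_map_one_eq_two {z : ZMod 8} (hz : 4 • z = 0) : z ∈ Set.range d := by
  simp only [Set.mem_range, apply_eq_val_nsmul_two_of_map_one_eq_two hd]
  revert z
  decide

theorem map_comp_of_map_one_eq_two {ι₄ : ZMod 2 →+ ZMod 4} (hι₄ : ι₄ 1 = 2)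
    {ι₈ : ZMod 2 →+ ZMod 8} (hι₈ : ι₈ 1 = 4) (c : ZMod 2) : d (ι₄ c) = ι₈ c := by
  rw [apply_eq_val_nsmul_two_of_map_one_eq_two hd, ι₄.map_zmod_eq_val_nsmul,
    ι₈.map_zmod_eq_val_nsmul, hι₄, hι₈]
  revert c
  decide

end ZModFourToEight

theorem stmt_9_general {V : Type*} [AddCommGroup V] [Module (ZMod 2) V]
    (B : V →ₗ[ZMod 2] V →ₗ[ZMod 2] ZMod 2)
    (ι₈ : ZMod 2 →+ ZMod 8) (hι₈ : ι₈ 1 = 4)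
    (ι₄ : ZMod 2 →+ ZMod 4) (hι₄ : ι₄ 1 = 2)
    (d : ZMod 4 →+ ZMod 8) (hd : d 1 = 2)
    (f : V → ZMod 8)
    (hf : ∀ x y : V, f (x + y) = f x + f y + ι₈ (B x y)) :
    ∃ e : V → ZMod 4,
      (∀ x y : V, e (x + y) = e x + e y + ι₄ (B x y)) ∧
      ∀ x : V, f x = d (e x) :=
  IsQuadraticEnhancement.exists_lift (injective_of_map_one_eq_two hd)
    (map_comp_of_map_one_eq_two hd hι₄ hι₈) hf
    fun x ↦ mem_range_of_map_one_eq_two hd (IsQuadraticEnhancement.four_nsmul_eq_zero hf x)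

/-- Every `ℤ/8`-valued quadratic enhancement of a bilinear form over `ℤ/2` is twice a
`ℤ/4`-valued enhancement: given `f : V → ZMod 8` with
`f(x+y) = f x + f y + ι₈(B x y)` where `ι₈ 1 = 4`, there is `e : V → ZMod 4` with
`e(x+y) = e x + e y + ι₄(B x y)` (where `ι₄ 1 = 2`) and `f = d ∘ e`
(where `d : ZMod 4 →+ ZMod 8` has `d 1 = 2`). -/
theorem stmt_9 {V : Type*} [AddCommGroup V] [Module (ZMod 2) V] [Finite V]
    (B : V →ₗ[ZMod 2] V →ₗ[ZMod 2] ZMod 2)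
    (ι₈ : ZMod 2 →+ ZMod 8) (hι₈ : ι₈ 1 = 4)
    (ι₄ : ZMod 2 →+ ZMod 4) (hι₄ : ι₄ 1 = 2)
    (d : ZMod 4 →+ ZMod 8) (hd : d 1 = 2)
    (f : V → ZMod 8)
    (hf : ∀ x y : V, f (x + y) = f x + f y + ι₈ (B x y)) :
    ∃ e : V → ZMod 4,
      (∀ x y : V, e (x + y) = e x + e y + ι₄ (B x y)) ∧
      ∀ x : V, f x = d (e x) :=
  stmt_9_general B ι₈ hι₈ ι₄ hι₄ d hd f hf
end

section
/- Let (V, B, e) be a ℤ/4-enhanced space. If there exists an element r in the radical (i.e. B(r,v) = 0 for all v ∈ V) with e(r) ≠ 0, then the fibers of e are balanced in pairs: the cardinality of e⁻¹(0) equals the cardinality of e⁻¹(2), and the cardinality of e⁻¹(1) equals the cardinality of e⁻¹(3). -/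
/-!
Translation by a radical element `r` adds the constant `e r` to `e`, and `e r + e r = e (r + r) = e 0 = 0`
in `ℤ/4`; so `e r ≠ 0` forces `e r = 2`, and `x ↦ r + x` maps each fiber `e⁻¹(a)` bijectively onto
`e⁻¹(a + 2)`.
-/

def IsEnhancement {R V M A : Type*} [CommSemiring R] [AddCommMonoid V] [Module R V]
    [AddCommMonoid M] [Module R M] [AddCommMonoid A]
    (B : V →ₗ[R] V →ₗ[R] M) (ι : M →+ A) (e : V → A) : Prop :=
  ∀ x y : V, e (x + y) = e x + e y + ι (B x y)

namespace IsEnhancement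

variable {R V M A : Type*} [CommSemiring R] [AddCommMonoid V] [Module R V]
  [AddCommMonoid M] [Module R M] [AddCommGroup A]
  {B : V →ₗ[R] V →ₗ[R] M} {ι : M →+ A} {e : V → A}

theorem map_zero (he : IsEnhancement B ι e) : e 0 = 0 := by
  have h := he 0 0
  rw [add_zero, LinearMap.map_zero₂, AddMonoidHom.map_zero, add_zero] at h
  exact left_eq_add.mp h

theorem map_add_of_mem_radical (he : IsEnhancement B ι e) {r : V} (hr : ∀ v, B r v = 0)
    (x : V) : e (r + x) = e r + e x := by
  rw [he, hr, AddMonoidHom.map_zero, add_zero]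

end IsEnhancement

theorem add_self_eq_zero_of_module_zmod_two {V : Type*} [AddCommGroup V] [Module (ZMod 2) V]
    (v : V) : v + v = 0 := by
  rw [← two_smul (ZMod 2), show (2 : ZMod 2) = 0 from rfl, zero_smul]

theorem ZMod.eq_two_of_add_self_eq_zero {c : ZMod 4} (hc : c + c = 0) (hc0 : c ≠ 0) : c = 2 := by
  revert c
  decide

theorem Nat.card_fiber_eq_card_fiber_add {G A : Type*} [AddGroup G] [AddGroup A] {f : G → A}
    {r : G} {c : A} (hf : ∀ x, f (r + x) = f x + c) (a : A) :
    Nat.card {x // f x = a} = Nat.card {x // f x = a + c} :=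
  Nat.card_congr <| (Equiv.addLeft r).subtypeEquiv fun x => by
    rw [Equiv.coe_addLeft, hf, add_left_inj]

theorem stmt_10_general {V : Type*} [AddCommGroup V] [Module (ZMod 2) V]
    (B : V →ₗ[ZMod 2] V →ₗ[ZMod 2] ZMod 2)
    (ι : ZMod 2 →+ ZMod 4)
    (e : V → ZMod 4)
    (he : ∀ x y : V, e (x + y) = e x + e y + ι (B x y))
    (r : V) (hr : ∀ v : V, B r v = 0) (her : e r ≠ 0) :
    Nat.card {x : V // e x = 0} = Nat.card {x : V // e x = 2} ∧
      Nat.card {x : V // e x = 1} = Nat.card {x : V // e x = 3} := by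
  have he : IsEnhancement B ι e := he
  have her_two : e r = 2 := by
    refine ZMod.eq_two_of_add_self_eq_zero ?_ her
    rw [← he.map_add_of_mem_radical hr, add_self_eq_zero_of_module_zmod_two, he.map_zero]
  have hshift : ∀ x, e (r + x) = e x + 2 := fun x => by
    rw [he.map_add_of_mem_radical hr, her_two, add_comm]
  exact ⟨Nat.card_fiber_eq_card_fiber_add hshift 0, Nat.card_fiber_eq_card_fiber_add hshift 1⟩

/-- If a `ℤ/4`-enhanced space `(V, B, e)` has a radical element `r` with `e r ≠ 0`, then
its fibers are balanced in pairs: `card e⁻¹(0) = card e⁻¹(2)` and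
`card e⁻¹(1) = card e⁻¹(3)`. -/
theorem stmt_10 {V : Type*} [AddCommGroup V] [Module (ZMod 2) V] [Finite V]
    (B : V →ₗ[ZMod 2] V →ₗ[ZMod 2] ZMod 2)
    (ι : ZMod 2 →+ ZMod 4) (hι : ι 1 = 2)
    (e : V → ZMod 4)
    (he : ∀ x y : V, e (x + y) = e x + e y + ι (B x y))
    (r : V) (hr : ∀ v : V, B r v = 0) (her : e r ≠ 0) :
    Nat.card {x : V // e x = 0} = Nat.card {x : V // e x = 2} ∧
      Nat.card {x : V // e x = 1} = Nat.card {x : V // e x = 3} :=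
  stmt_10_general B ι e he r hr her
end
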